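/- If RᵀR_d = exp(θ v̂) for θ ∈ [0, π] and a unit vector v ∈ ℝ³, then ‖R − R_d‖² = 4(1 − cos θ) and ‖½(R_dᵀR − RᵀR_d)^∨‖ = sin θ, where R, R_d ∈ SO(3). -/

import Mathlib

/-! Since `v̂ ^ 3 = -v̂` for a unit vector `v`, splitting the exponential series into even and odd
powers gives Rodrigues' formula `exp (θ v̂) = 1 + sin θ v̂ + (1 - cos θ) v̂²`. For orthogonal `R`,
`R_d` one has `‖R - R_d‖² = 2 (3 - tr (Rᵀ R_d))`, and `tr exp (θ v̂) = 1 + 2 cos θ` because `v̂` is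
traceless and `tr v̂² = -2`. The antisymmetric part of `exp (θ v̂)` is `sin θ v̂`, whose vee is
`sin θ v`. -/

open Matrix Real

noncomputable def hat (v : Fin 3 → ℝ) : Matrix (Fin 3) (Fin 3) ℝ :=
  !![0, -v 2, v 1; v 2, 0, -v 0; -v 1, v 0, 0]

noncomputable def vee (A : Matrix (Fin 3) (Fin 3) ℝ) : Fin 3 → ℝ := ![A 2 1, A 0 2, A 1 0]

/-- Frobenius norm of a 3×3 real matrix: ‖A‖ = √(tr(Aᵀ A)). -/
noncomputable def fnorm (A : Matrix (Fin 3) (Fin 3) ℝ) : ℝ := Real.sqrt ((Aᵀ * A).trace)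

/-- Euclidean norm on ℝ³. -/
noncomputable def enorm3 (v : Fin 3 → ℝ) : ℝ := Real.sqrt (v ⬝ᵥ v)

/-- The special orthogonal group SO(3). -/
def SO3 (R : Matrix (Fin 3) (Fin 3) ℝ) : Prop := Rᵀ * R = 1 ∧ R.det = 1

open scoped Nat

section PowThreeEqNeg

variable {𝔸 : Type*}

lemma pow_two_mul_add_one_of_pow_three_eq_neg [Ring 𝔸] [Algebra ℝ 𝔸] {A : 𝔸}
    (hA : A ^ 3 = -A) (n : ℕ) : A ^ (2 * n + 1) = (-1 : ℝ) ^ n • A := by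
  induction n with
  | zero => simp
  | succ n ih =>
    rw [show 2 * (n + 1) + 1 = 2 + (2 * n + 1) by ring, pow_add, ih, mul_smul_comm,
      ← pow_succ, hA, pow_succ, mul_neg_one, neg_smul, smul_neg]

lemma pow_two_mul_succ_of_pow_three_eq_neg [Ring 𝔸] [Algebra ℝ 𝔸] {A : 𝔸}
    (hA : A ^ 3 = -A) (n : ℕ) : A ^ (2 * (n + 1)) = (-1 : ℝ) ^ n • A ^ 2 := by
  rw [show 2 * (n + 1) = 2 * n + 1 + 1 by ring, pow_succ,
    pow_two_mul_add_one_of_pow_three_eq_neg hA, smul_mul_assoc, ← pow_two]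

theorem exp_smul_of_pow_three_eq_neg [NormedRing 𝔸] [NormedAlgebra ℝ 𝔸] [CompleteSpace 𝔸]
    {A : 𝔸} (hA : A ^ 3 = -A) (θ : ℝ) :
    NormedSpace.exp (θ • A) = 1 + sin θ • A + (1 - cos θ) • A ^ 2 := by
  have hodd : HasSum (fun k ↦ ((2 * k + 1)!⁻¹ : ℝ) • (θ • A) ^ (2 * k + 1)) (sin θ • A) := by
    refine ((hasSum_sin θ).smul_const A).congr_fun fun k ↦ ?_
    rw [smul_pow, pow_two_mul_add_one_of_pow_three_eq_neg hA, smul_smul, smul_smul]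
    congr 1
    field_simp
  have heven : HasSum (fun k ↦ ((2 * k)!⁻¹ : ℝ) • (θ • A) ^ (2 * k))
      (1 + (1 - cos θ) • A ^ 2) := by
    -- the `k = 0` term is `1`; the remaining ones are the tail of the cosine series times `-A ^ 2`
    rw [← hasSum_nat_add_iff' 1]
    have hcos := (hasSum_nat_add_iff' 1).2 (hasSum_cos θ)
    simp only [Finset.sum_range_one, mul_zero, pow_zero, Nat.factorial_zero, Nat.cast_one,
      div_one, one_mul, inv_one, one_smul, add_sub_cancel_left, ← neg_sub (cos θ)] at hcos ⊢
    refine (hcos.neg.smul_const (A ^ 2)).congr_fun fun k ↦ ?_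
    rw [smul_pow, pow_two_mul_succ_of_pow_three_eq_neg hA, smul_smul, smul_smul, pow_succ]
    congr 1
    field_simp
    ring
  rw [(NormedSpace.exp_series_hasSum_exp' (θ • A)).unique (heven.even_add_odd hodd)]
  exact add_right_comm _ _ _

end PowThreeEqNeg

lemma trace_transpose_mul_self_nonneg {m n R : Type*} [Fintype m] [Fintype n] [CommRing R]
    [LinearOrder R] [IsStrictOrderedRing R] (A : Matrix m n R) : 0 ≤ (Aᵀ * A).trace :=
  Finset.sum_nonneg fun _ _ ↦ Finset.sum_nonneg fun _ _ ↦ mul_self_nonneg _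

lemma trace_transpose_mul_sub_of_orthogonal {n R : Type*} [Fintype n] [DecidableEq n]
    [CommRing R] {P Q : Matrix n n R} (hP : Pᵀ * P = 1) (hQ : Qᵀ * Q = 1) :
    ((P - Q)ᵀ * (P - Q)).trace = 2 * (Fintype.card n - (Pᵀ * Q).trace) := by
  have hQP : (Qᵀ * P).trace = (Pᵀ * Q).trace := by
    rw [← trace_transpose, transpose_mul, transpose_transpose]
  rw [transpose_sub, sub_mul, mul_sub, mul_sub, trace_sub, trace_sub, trace_sub, hP, hQ, hQP,
    trace_one]
  ring

lemma fnorm_sq (A : Matrix (Fin 3) (Fin 3) ℝ) : fnorm A ^ 2 = (Aᵀ * A).trace :=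
  sq_sqrt (trace_transpose_mul_self_nonneg A)

lemma enorm3_smul (c : ℝ) (v : Fin 3 → ℝ) : enorm3 (c • v) = |c| * enorm3 v := by
  rw [enorm3, enorm3, smul_dotProduct, dotProduct_smul, smul_eq_mul, smul_eq_mul, ← mul_assoc,
    sqrt_mul (mul_self_nonneg c), sqrt_mul_self_eq_abs]

lemma enorm3_eq_one_iff {v : Fin 3 → ℝ} : enorm3 v = 1 ↔ v ⬝ᵥ v = 1 :=
  sqrt_eq_one

lemma vee_smul (c : ℝ) (A : Matrix (Fin 3) (Fin 3) ℝ) : vee (c • A) = c • vee A := by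
  ext i
  fin_cases i <;> rfl

lemma vee_hat (v : Fin 3 → ℝ) : vee (hat v) = v := by
  ext i
  fin_cases i <;> rfl

lemma transpose_hat (v : Fin 3 → ℝ) : (hat v)ᵀ = -hat v := by
  ext i j
  fin_cases i <;> fin_cases j <;> simp [hat]

lemma trace_hat (v : Fin 3 → ℝ) : (hat v).trace = 0 := by
  simp [hat, trace, Fin.sum_univ_three]

lemma trace_hat_sq (v : Fin 3 → ℝ) : (hat v ^ 2).trace = -2 * (v ⬝ᵥ v) := by
  simp [hat, trace, sq, dotProduct, Fin.sum_univ_three]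
  ring

lemma hat_pow_three (v : Fin 3 → ℝ) : hat v ^ 3 = -(v ⬝ᵥ v) • hat v := by
  ext i j
  fin_cases i <;> fin_cases j <;>
    simp [hat, pow_succ, mul_apply, dotProduct, Fin.sum_univ_three] <;> ring

theorem exp_smul_hat (θ : ℝ) {v : Fin 3 → ℝ} (hv : v ⬝ᵥ v = 1) :
    NormedSpace.exp (θ • hat v) = 1 + sin θ • hat v + (1 - cos θ) • hat v ^ 2 := by
  -- `NormedSpace.exp` depends only on the topology, which every matrix norm induces
  let _ : NormedRing (Matrix (Fin 3) (Fin 3) ℝ) := Matrix.linftyOpNormedRing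
  let _ : NormedAlgebra ℝ (Matrix (Fin 3) (Fin 3) ℝ) := Matrix.linftyOpNormedAlgebra
  exact exp_smul_of_pow_three_eq_neg (by rw [hat_pow_three, hv, neg_one_smul]) θ

lemma trace_exp_smul_hat (θ : ℝ) {v : Fin 3 → ℝ} (hv : v ⬝ᵥ v = 1) :
    (NormedSpace.exp (θ • hat v)).trace = 1 + 2 * cos θ := by
  rw [exp_smul_hat θ hv, trace_add, trace_add, trace_smul, trace_smul, trace_one, trace_hat,
    trace_hat_sq, hv, Fintype.card_fin, smul_eq_mul, smul_eq_mul]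
  ring

lemma transpose_exp_smul_hat_sub (θ : ℝ) {v : Fin 3 → ℝ} (hv : v ⬝ᵥ v = 1) :
    (NormedSpace.exp (θ • hat v))ᵀ - NormedSpace.exp (θ • hat v) = -(2 * sin θ) • hat v := by
  rw [exp_smul_hat θ hv, transpose_add, transpose_add, transpose_smul, transpose_smul,
    transpose_one, transpose_pow, transpose_hat, neg_sq]
  module

theorem axis_angle_errors (R Rd : Matrix (Fin 3) (Fin 3) ℝ) (hR : SO3 R) (hRd : SO3 Rd)
    (θ : ℝ) (hθ : θ ∈ Set.Icc 0 Real.pi) (v : Fin 3 → ℝ) (hv : enorm3 v = 1)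
    (hRRd : Rᵀ * Rd = NormedSpace.exp (θ • hat v)) :
    fnorm (R - Rd) ^ 2 = 4 * (1 - Real.cos θ) ∧
    enorm3 ((1 / 2 : ℝ) • vee (Rdᵀ * R - Rᵀ * Rd)) = Real.sin θ := by
  have hv' : v ⬝ᵥ v = 1 := enorm3_eq_one_iff.1 hv
  have hRdR : Rdᵀ * R = (Rᵀ * Rd)ᵀ := by rw [transpose_mul, transpose_transpose]
  constructor
  · rw [fnorm_sq, trace_transpose_mul_sub_of_orthogonal hR.1 hRd.1, hRRd,
      trace_exp_smul_hat θ hv', Fintype.card_fin]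
    ring
  · rw [hRdR, hRRd, transpose_exp_smul_hat_sub θ hv', vee_smul, vee_hat, smul_smul,
      enorm3_smul, hv, mul_one, show (1 / 2 : ℝ) * -(2 * sin θ) = -sin θ by ring, abs_neg,
      abs_of_nonneg (sin_nonneg_of_mem_Icc hθ)]
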